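/- arXiv:2110.15520 — 3 statements merged into one kernel-verified Lean document; each statement's English description precedes it below -/
import Mathlib

section
/- Let P^S, P^T be probability measures on Polish spaces X^S, X^T, and f^S : X^S -> Y_Delta, f^T : X^T -> Y_Delta measurable maps into a Polish metric space (Y_Delta, d_Y). Then inf over couplings gamma' of (P^S, P^T) of E_{(x^S, x^T) ~ gamma'}[d_Y(f^S(x^S), f^T(x^T))] equals W_{d_Y}(f^S # P^S, f^T # P^T), the Wasserstein distance between the pushforward measures. -/
open MeasureTheory ENNReal

/-- Kantorovich optimal transport cost between `μ` and `ν` for cost `c`: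
infimum over all couplings (joint measures with the given marginals). -/
noncomputable def transportCost {X Y : Type*} [MeasurableSpace X] [MeasurableSpace Y]
    (c : X → Y → ℝ≥0∞) (μ : Measure X) (ν : Measure Y) : ℝ≥0∞ :=
  ⨅ (γ : Measure (X × Y)) (_ : γ.map Prod.fst = μ ∧ γ.map Prod.snd = ν),
    ∫⁻ q, c q.1 q.2 ∂γ

/-!
Pushing a coupling of `μ` and `ν` forward along `f × g` gives a coupling of the image measures
with the same cost. Conversely, a coupling `γ` of the image measures lifts to one of `μ` and `ν`:
draw `(y, y')` from `γ`, then `x` and `x'` independently from the conditional distributions of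
`μ` given `f = y` and of `ν` given `g = y'`. These live on the fibres, so the cost is unchanged,
and averaged over the image measures they give back `μ` and `ν`.
-/

open ProbabilityTheory

section

variable {X X' Y Y' : Type*} [MeasurableSpace X] [MeasurableSpace X']

lemma lintegral_prod_eq_of_ae_eq {μ : Measure X} {ν : Measure X'} [IsProbabilityMeasure μ]
    [IsProbabilityMeasure ν] {f : X → Y} {g : X' → Y'} {y : Y} {y' : Y'}
    (hf : ∀ᵐ x ∂μ, f x = y) (hg : ∀ᵐ x' ∂ν, g x' = y') (c : Y → Y' → ℝ≥0∞) :
    ∫⁻ q, c (f q.1) (g q.2) ∂(μ.prod ν) = c y y' := by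
  have h : ∀ᵐ q ∂(μ.prod ν), c (f q.1) (g q.2) = c y y' := by
    filter_upwards [Measure.quasiMeasurePreserving_fst.ae hf,
      Measure.quasiMeasurePreserving_snd.ae hg] with q hq hq'
    rw [hq, hq']
  rw [lintegral_congr_ae h, lintegral_const, measure_univ, mul_one]

variable [MeasurableSpace Y] [MeasurableSpace Y']

lemma ae_condDistrib_id_eq [StandardBorelSpace X] [Nonempty X] [MeasurableEq Y]
    (μ : Measure X) [IsFiniteMeasure μ] {f : X → Y} (hf : Measurable f) :
    ∀ᵐ y ∂(μ.map f), ∀ᵐ x ∂(condDistrib id f μ y), f x = y := by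
  have h_graph : ∀ᵐ p ∂(μ.map f ⊗ₘ condDistrib id f μ), f p.2 = p.1 := by
    rw [compProd_map_condDistrib measurable_id.aemeasurable]
    exact (ae_map_iff (hf.prodMk measurable_id).aemeasurable
      (measurableSet_eq_fun (hf.comp measurable_snd) measurable_fst)).2 (ae_of_all _ fun _ ↦ rfl)
  exact Measure.ae_ae_of_ae_compProd h_graph

lemma MeasureTheory.Measure.fst_parallelComp_comp (γ : Measure (Y × Y')) (κ : Kernel Y X)
    [IsSFiniteKernel κ] (η : Kernel Y' X') [IsMarkovKernel η] :
    ((κ ∥ₖ η) ∘ₘ γ).fst = κ ∘ₘ γ.fst := by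
  ext s hs
  rw [Measure.fst_apply hs, Measure.bind_apply (measurable_fst hs) (Kernel.aemeasurable _),
    Measure.bind_apply hs κ.aemeasurable, Measure.fst,
    lintegral_map (κ.measurable_coe hs) measurable_fst, ← Set.prod_univ]
  simp_rw [Kernel.parallelComp_apply_prod, measure_univ, mul_one]

lemma MeasureTheory.Measure.snd_parallelComp_comp (γ : Measure (Y × Y')) (κ : Kernel Y X)
    [IsMarkovKernel κ] (η : Kernel Y' X') [IsSFiniteKernel η] :
    ((κ ∥ₖ η) ∘ₘ γ).snd = η ∘ₘ γ.snd := by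
  ext s hs
  rw [Measure.snd_apply hs, Measure.bind_apply (measurable_snd hs) (Kernel.aemeasurable _),
    Measure.bind_apply hs η.aemeasurable, Measure.snd,
    lintegral_map (η.measurable_coe hs) measurable_snd, ← Set.univ_prod]
  simp_rw [Kernel.parallelComp_apply_prod, measure_univ, one_mul]

variable {μ : Measure X} {ν : Measure X'} {f : X → Y} {g : X' → Y'} {c : Y → Y' → ℝ≥0∞}

lemma transportCost_le_lintegral {γ : Measure (X × X')} (hγ₁ : γ.map Prod.fst = μ)
    (hγ₂ : γ.map Prod.snd = ν) (c : X → X' → ℝ≥0∞) :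
    transportCost c μ ν ≤ ∫⁻ q, c q.1 q.2 ∂γ :=
  iInf₂_le γ ⟨hγ₁, hγ₂⟩

lemma transportCost_map_le_comp (hc : Measurable (Function.uncurry c)) (hf : Measurable f)
    (hg : Measurable g) :
    transportCost c (μ.map f) (ν.map g) ≤ transportCost (fun x x' ↦ c (f x) (g x')) μ ν := by
  refine le_iInf₂ fun γ ⟨hγ₁, hγ₂⟩ ↦ ?_
  have hfg : Measurable (Prod.map f g) := hf.prodMap hg
  refine (transportCost_le_lintegral ?_ ?_ c).trans_eq (lintegral_map hc hfg)
  · rw [Measure.map_map measurable_fst hfg, ← hγ₁, Measure.map_map hf measurable_fst]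
    rfl
  · rw [Measure.map_map measurable_snd hfg, ← hγ₂, Measure.map_map hg measurable_snd]
    rfl

lemma transportCost_comp_le_map [StandardBorelSpace X] [Nonempty X] [StandardBorelSpace X']
    [Nonempty X'] [MeasurableEq Y] [MeasurableEq Y'] [IsFiniteMeasure μ] [IsFiniteMeasure ν]
    (hc : Measurable (Function.uncurry c)) (hf : Measurable f) (hg : Measurable g) :
    transportCost (fun x x' ↦ c (f x) (g x')) μ ν ≤ transportCost c (μ.map f) (ν.map g) := by
  refine le_iInf₂ fun γ ⟨hγ₁, hγ₂⟩ ↦ ?_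
  set κ := condDistrib id f μ ∥ₖ condDistrib id g ν
  have hκ : ∀ᵐ p ∂γ, ∫⁻ q, c (f q.1) (g q.2) ∂(κ p) = c p.1 p.2 := by
    filter_upwards [ae_of_ae_map measurable_fst.aemeasurable (hγ₁ ▸ ae_condDistrib_id_eq μ hf),
      ae_of_ae_map measurable_snd.aemeasurable (hγ₂ ▸ ae_condDistrib_id_eq ν hg)] with p hp hp'
    rw [Kernel.parallelComp_apply]
    exact lintegral_prod_eq_of_ae_eq hp hp' c
  calc transportCost (fun x x' ↦ c (f x) (g x')) μ ν
      ≤ ∫⁻ q, c (f q.1) (g q.2) ∂(κ ∘ₘ γ) := by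
        refine transportCost_le_lintegral ?_ ?_ _
        · rw [← Measure.fst, Measure.fst_parallelComp_comp, Measure.fst, hγ₁,
            condDistrib_comp_map hf.aemeasurable aemeasurable_id, Measure.map_id]
        · rw [← Measure.snd, Measure.snd_parallelComp_comp, Measure.snd, hγ₂,
            condDistrib_comp_map hg.aemeasurable aemeasurable_id, Measure.map_id]
    _ = ∫⁻ p, c p.1 p.2 ∂γ :=
        (Measure.lintegral_bind κ.aemeasurable
          (hc.comp (hf.prodMap hg)).aemeasurable).trans (lintegral_congr_ae hκ)

theorem transportCost_comp_eq_map [StandardBorelSpace X] [Nonempty X] [StandardBorelSpace X']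
    [Nonempty X'] [MeasurableEq Y] [MeasurableEq Y'] [IsFiniteMeasure μ] [IsFiniteMeasure ν]
    (hc : Measurable (Function.uncurry c)) (hf : Measurable f) (hg : Measurable g) :
    transportCost (fun x x' ↦ c (f x) (g x')) μ ν = transportCost c (μ.map f) (ν.map g) :=
  (transportCost_comp_le_map hc hf hg).antisymm (transportCost_map_le_comp hc hf hg)

end

/-- the infimum over couplings of `(P^S, P^T)` of the expected label distance
`d_Y(f^S x^S, f^T x^T)` equals the Wasserstein distance between the pushforward measures
`f^S # P^S` and `f^T # P^T`. -/
theorem stmt3 {XS XT Y : Type*}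
    [MeasurableSpace XS] [StandardBorelSpace XS]
    [MeasurableSpace XT] [StandardBorelSpace XT]
    [MetricSpace Y] [MeasurableSpace Y] [BorelSpace Y] [PolishSpace Y]
    (PS : Measure XS) (PT : Measure XT)
    [IsProbabilityMeasure PS] [IsProbabilityMeasure PT]
    (fS : XS → Y) (fT : XT → Y) (hfS : Measurable fS) (hfT : Measurable fT) :
    transportCost (fun xs xt => edist (fS xs) (fT xt)) PS PT
      = transportCost (fun y1 y2 : Y => edist y1 y2) (PS.map fS) (PT.map fT) := by
  have := nonempty_of_isProbabilityMeasure PS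
  have := nonempty_of_isProbabilityMeasure PT
  exact transportCost_comp_eq_map measurable_edist hfS hfT
end

section
/- Let (P^S, f^S, h^S) and (P^T, f^T, h^T) be measurable labeling and hypothesis functions on Polish spaces, mapping into a bounded metric space (Y_Delta, d_Y). Suppose h^S = h o g^S and h^T = h o g^T for a common measurable h : Z -> Y_Delta in a family H, with g^S, g^T measurable feature maps, and let d_Z(z1, z2) = sup_{h in H} d_Y(h(z1), h(z2)) be a metric. Then LS(S,T) := W_{d_Y}(f^S # P^S, f^T # P^T) <= E_{P^S}[d_Y(h^S(x), f^S(x))] + E_{P^T}[d_Y(h^T(x), f^T(x))] + W_{d_Z}(g^S # P^S, g^T # P^T). -/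
/-!
Given a coupling `γ` of the feature distributions `gS # PS` and `gT # PT`, glue to
it the conditional laws of `x` given `gS x = z` and of `x'` given `gT x' = z'`. This yields a
coupling `π` of `PS` and `PT` whose image under `gS × gT` is `γ`. Pushing `π` forward by
`fS × fT` couples the label distributions, and the triangle inequality
`d(fS x, fT x') ≤ d(fS x, h (gS x)) + d(h (gS x), h (gT x')) + d(h (gT x'), fT x')`,
integrated against `π`, gives the bound, since `d(h z, h z') ≤ d_Z(z, z')`.
-/

open MeasureTheory ENNReal ProbabilityTheory

section Coupling

variable {X X' Z Z' : Type*} [MeasurableSpace X] [MeasurableSpace X'] [MeasurableSpace Z]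
  [MeasurableSpace Z']

lemma MeasureTheory.Measure.comp_map_eq_comp_comap (μ : Measure Z) (κ : Kernel Z' X)
    {f : Z → Z'} (hf : Measurable f) : κ ∘ₘ μ.map f = κ.comap f hf ∘ₘ μ := by
  rw [← Measure.deterministic_comp_eq_map hf, Measure.comp_assoc,
    Kernel.comp_deterministic_eq_comap]

lemma MeasureTheory.Measure.map_fst_parallelComp_comp (γ : Measure (Z × Z')) (κ : Kernel Z X)
    [IsSFiniteKernel κ] (η : Kernel Z' X') [IsMarkovKernel η] :
    ((κ ∥ₖ η) ∘ₘ γ).map Prod.fst = κ ∘ₘ γ.map Prod.fst := by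
  have hfst : (κ ∥ₖ η).map Prod.fst = κ.comap Prod.fst measurable_fst := by
    ext1 p
    rw [Kernel.map_apply _ measurable_fst, Kernel.parallelComp_apply, Measure.map_fst_prod,
      measure_univ, one_smul, Kernel.comap_apply]
  rw [Measure.map_comp _ _ measurable_fst, hfst, Measure.comp_map_eq_comp_comap]

lemma MeasureTheory.Measure.map_snd_parallelComp_comp (γ : Measure (Z × Z')) (κ : Kernel Z X)
    [IsMarkovKernel κ] (η : Kernel Z' X') [IsSFiniteKernel η] :
    ((κ ∥ₖ η) ∘ₘ γ).map Prod.snd = η ∘ₘ γ.map Prod.snd := by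
  have hsnd : (κ ∥ₖ η).map Prod.snd = η.comap Prod.snd measurable_snd := by
    ext1 p
    rw [Kernel.map_apply _ measurable_snd, Kernel.parallelComp_apply, Measure.map_snd_prod,
      measure_univ, one_smul, Kernel.comap_apply]
  rw [Measure.map_comp _ _ measurable_snd, hsnd, Measure.comp_map_eq_comp_comap]

variable [StandardBorelSpace X] [Nonempty X] [StandardBorelSpace X'] [Nonempty X']

lemma condDistrib_id_comp_map (μ : Measure X) [IsFiniteMeasure μ] {g : X → Z}
    (hg : Measurable g) : condDistrib id g μ ∘ₘ μ.map g = μ := by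
  rw [condDistrib_comp_map hg.aemeasurable aemeasurable_id, Measure.map_id]

variable [StandardBorelSpace Z] [Nonempty Z] [StandardBorelSpace Z'] [Nonempty Z']

lemma ae_map_condDistrib_id_eq_dirac (μ : Measure X) [IsFiniteMeasure μ] {g : X → Z}
    (hg : Measurable g) :
    ∀ᵐ z ∂μ.map g, (condDistrib id g μ z).map g = Measure.dirac z := by
  filter_upwards [(condDistrib_comp g aemeasurable_id hg).symm.trans (condDistrib_self g)]
    with z hz
  rwa [Kernel.map_apply _ hg, Kernel.id_apply] at hz

lemma exists_coupling_map_prodMap_eq (μ : Measure X) (ν : Measure X') [IsFiniteMeasure μ]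
    [IsFiniteMeasure ν] {g : X → Z} {g' : X' → Z'} (hg : Measurable g) (hg' : Measurable g')
    (γ : Measure (Z × Z')) (hγ₁ : γ.map Prod.fst = μ.map g) (hγ₂ : γ.map Prod.snd = ν.map g') :
    ∃ π : Measure (X × X'), π.map Prod.fst = μ ∧ π.map Prod.snd = ν ∧
      π.map (Prod.map g g') = γ := by
  set κ := condDistrib id g μ
  set η := condDistrib id g' ν
  refine ⟨(κ ∥ₖ η) ∘ₘ γ, ?_, ?_, ?_⟩
  · rw [Measure.map_fst_parallelComp_comp, hγ₁, condDistrib_id_comp_map μ hg]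
  · rw [Measure.map_snd_parallelComp_comp, hγ₂, condDistrib_id_comp_map ν hg']
  have hκ : ∀ᵐ p ∂γ, (κ p.1).map g = Measure.dirac p.1 :=
    ae_of_ae_map measurable_fst.aemeasurable (hγ₁ ▸ ae_map_condDistrib_id_eq_dirac μ hg)
  have hη : ∀ᵐ p ∂γ, (η p.2).map g' = Measure.dirac p.2 :=
    ae_of_ae_map measurable_snd.aemeasurable (hγ₂ ▸ ae_map_condDistrib_id_eq_dirac ν hg')
  calc ((κ ∥ₖ η) ∘ₘ γ).map (Prod.map g g')
      = Kernel.id ∘ₘ γ := by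
        rw [Measure.map_comp _ _ (hg.prodMap hg')]
        refine Measure.comp_congr ?_
        filter_upwards [hκ, hη] with p hp₁ hp₂
        rw [Kernel.map_apply _ (hg.prodMap hg'), Kernel.parallelComp_apply,
          ← Measure.map_prod_map _ _ hg hg', hp₁, hp₂, Measure.dirac_prod_dirac, Kernel.id_apply]
    _ = γ := Measure.id_comp

end Coupling

section TransportCost

variable {X X' Y Y' Z Z' : Type*} [MeasurableSpace X] [MeasurableSpace X'] [MeasurableSpace Y]
  [MeasurableSpace Y'] [MeasurableSpace Z] [MeasurableSpace Z']

lemma transportCost_map_le_lintegral {c : Y → Y' → ℝ≥0∞} (hc : Measurable (Function.uncurry c))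
    (π : Measure (X × X')) {f : X → Y} {f' : X' → Y'} (hf : Measurable f) (hf' : Measurable f') :
    transportCost c ((π.map Prod.fst).map f) ((π.map Prod.snd).map f')
      ≤ ∫⁻ q, c (f q.1) (f' q.2) ∂π := by
  have hff' : Measurable (Prod.map f f') := hf.prodMap hf'
  refine iInf₂_le_of_le (π.map (Prod.map f f')) ⟨?_, ?_⟩ ?_
  · rw [Measure.map_map measurable_fst hff', Measure.map_map hf measurable_fst]; rfl
  · rw [Measure.map_map measurable_snd hff', Measure.map_map hf' measurable_snd]; rfl
  · exact (lintegral_map hc hff').le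

theorem transportCost_map_le_add_transportCost_map [StandardBorelSpace X] [Nonempty X]
    [StandardBorelSpace X'] [Nonempty X'] [StandardBorelSpace Z] [Nonempty Z]
    [StandardBorelSpace Z'] [Nonempty Z'] {μ : Measure X} {ν : Measure X'} [IsFiniteMeasure μ]
    [IsFiniteMeasure ν] {c : Y → Y' → ℝ≥0∞} (hc : Measurable (Function.uncurry c))
    (c' : Z → Z' → ℝ≥0∞) {f : X → Y} {f' : X' → Y'} {g : X → Z} {g' : X' → Z'}
    (hf : Measurable f) (hf' : Measurable f') (hg : Measurable g) (hg' : Measurable g')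
    (a : ℝ≥0∞) (hcost : ∀ π : Measure (X × X'), π.map Prod.fst = μ → π.map Prod.snd = ν →
      ∫⁻ q, c (f q.1) (f' q.2) ∂π ≤ a + ∫⁻ p, c' p.1 p.2 ∂π.map (Prod.map g g')) :
    transportCost c (μ.map f) (ν.map f') ≤ a + transportCost c' (μ.map g) (ν.map g') := by
  conv_rhs => rw [transportCost]; simp only [ENNReal.add_iInf]
  refine le_iInf₂ fun γ ⟨hγ₁, hγ₂⟩ => ?_
  obtain ⟨π, hπ₁, hπ₂, hπγ⟩ := exists_coupling_map_prodMap_eq μ ν hg hg' γ hγ₁ hγ₂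
  subst hπ₁ hπ₂ hπγ
  exact (transportCost_map_le_lintegral hc π hf hf').trans (hcost π rfl rfl)

end TransportCost

theorem stmt9_general {XS XT Z Y : Type*}
    [MeasurableSpace XS] [StandardBorelSpace XS]
    [MeasurableSpace XT] [StandardBorelSpace XT]
    [MeasurableSpace Z] [StandardBorelSpace Z]
    [MetricSpace Y] [MeasurableSpace Y] [BorelSpace Y] [PolishSpace Y]
    (PS : Measure XS) (PT : Measure XT)
    [IsProbabilityMeasure PS] [IsProbabilityMeasure PT]
    (fS : XS → Y) (fT : XT → Y) (gS : XS → Z) (gT : XT → Z)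
    (hfS : Measurable fS) (hfT : Measurable fT)
    (hgS : Measurable gS) (hgT : Measurable gT)
    (H : Set (Z → Y)) (h : Z → Y) (hH : h ∈ H)
    (hmeas : ∀ h' ∈ H, Measurable h') :
    transportCost (fun y1 y2 : Y => edist y1 y2) (PS.map fS) (PT.map fT)
      ≤ (∫⁻ x, edist (h (gS x)) (fS x) ∂PS)
        + (∫⁻ x, edist (h (gT x)) (fT x) ∂PT)
        + transportCost (fun z1 z2 : Z => ⨆ h' ∈ H, edist (h' z1) (h' z2))
            (PS.map gS) (PT.map gT) := by
  have := nonempty_of_isProbabilityMeasure PS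
  have := nonempty_of_isProbabilityMeasure PT
  have : Nonempty Z := ⟨gS (Classical.arbitrary XS)⟩
  have hh : Measurable h := hmeas h hH
  refine transportCost_map_le_add_transportCost_map measurable_edist _ hfS hfT hgS hgT _
    fun π hπ₁ hπ₂ => ?_
  calc ∫⁻ q, edist (fS q.1) (fT q.2) ∂π
      ≤ ∫⁻ q, edist (h (gS q.1)) (fS q.1) + edist (h (gT q.2)) (fT q.2)
          + edist (h (gS q.1)) (h (gT q.2)) ∂π := by
        refine lintegral_mono fun q => (edist_triangle4 _ (h (gS q.1)) (h (gT q.2)) _).trans ?_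
        rw [edist_comm (fS q.1), add_right_comm]
    _ = (∫⁻ x, edist (h (gS x)) (fS x) ∂PS) + (∫⁻ x, edist (h (gT x)) (fT x) ∂PT)
          + ∫⁻ p, edist (h p.1) (h p.2) ∂π.map (Prod.map gS gT) := by
        rw [lintegral_add_right _ (by fun_prop), lintegral_add_right _ (by fun_prop), ← hπ₁, ← hπ₂,
          lintegral_map (by fun_prop) measurable_fst, lintegral_map (by fun_prop) measurable_snd,
          lintegral_map (by fun_prop) (hgS.prodMap hgT)]
        rfl
    _ ≤ _ := by
        gcongr with p
        exact le_biSup (fun h' => edist (h' p.1) (h' p.2)) hH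

/-- Theorem 4 of the paper: with `h^S = h ∘ g^S`, `h^T = h ∘ g^T` for `h ∈ H`
and `d_Z(z1,z2) = sup_{h' ∈ H} d_Y(h'(z1), h'(z2))`,
`LS(S,T) = W_{d_Y}(f^S # P^S, f^T # P^T)
  ≤ L(h^S, f^S, P^S) + L(h^T, f^T, P^T) + W_{d_Z}(g^S # P^S, g^T # P^T)`. -/
theorem stmt9 {XS XT Z Y : Type*}
    [MeasurableSpace XS] [StandardBorelSpace XS]
    [MeasurableSpace XT] [StandardBorelSpace XT]
    [MeasurableSpace Z] [StandardBorelSpace Z]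
    [MetricSpace Y] [MeasurableSpace Y] [BorelSpace Y] [PolishSpace Y] [BoundedSpace Y]
    (PS : Measure XS) (PT : Measure XT)
    [IsProbabilityMeasure PS] [IsProbabilityMeasure PT]
    (fS : XS → Y) (fT : XT → Y) (gS : XS → Z) (gT : XT → Z)
    (hfS : Measurable fS) (hfT : Measurable fT)
    (hgS : Measurable gS) (hgT : Measurable gT)
    (H : Set (Z → Y)) (h : Z → Y) (hH : h ∈ H)
    (hmeas : ∀ h' ∈ H, Measurable h')
    (hsep : ∀ z1 z2 : Z, (∀ h' ∈ H, h' z1 = h' z2) → z1 = z2) :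
    transportCost (fun y1 y2 : Y => edist y1 y2) (PS.map fS) (PT.map fT)
      ≤ (∫⁻ x, edist (h (gS x)) (fS x) ∂PS)
        + (∫⁻ x, edist (h (gT x)) (fT x) ∂PT)
        + transportCost (fun z1 z2 : Z => ⨆ h' ∈ H, edist (h' z1) (h' z2))
            (PS.map gS) (PT.map gT) :=
  stmt9_general PS PT fS fT gS gT hfS hfT hgS hgT H h hH hmeas
end

section
/- Let P_{f^S} and P_{f^T} be probability measures supported on the simplex Delta^{M-1} in R^M. Suppose labels in {C+1, ..., M} are absent from the target, i.e., the coordinates C+1 through M of any point in the support of P_{f^T} are zero. Let Q_S, Q_T be the marginals of P_{f^S}, P_{f^T} on the first C-1 coordinates, and Q_{S\T} the marginal of P_{f^S} on coordinates C+1 through M. Then for p >= 1: W_p^p(P_{f^S}, P_{f^T}) >= W_p^p(Q_S, Q_T) + E_{X ~ Q_{S\T}}[||X||_p^p]. -/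
/-!
Any coupling `γ` of `μ` and `ν` pushes forward, coordinate by coordinate, to a coupling of the
marginals on the first `C - 1` labels, and its first marginal is `μ`. Since `ν` vanishes on the
labels `C + 1, …, M`, the cost `|x i - y i| ^ p` of such a label is `|x i| ^ p`, so splitting the
cost of `γ` over the disjoint blocks of labels (and discarding label `C`) bounds it below by the
cost of the pushed coupling plus `E_μ[∑_{i > C} |x i| ^ p]`.
-/

open MeasureTheory ENNReal

section Transport

variable {X Y X' Y' Z : Type*} [MeasurableSpace X] [MeasurableSpace Y]
  [MeasurableSpace X'] [MeasurableSpace Y'] [MeasurableSpace Z]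

theorem transportCost_map_le (c : X' → Y' → ℝ≥0∞) {μ : Measure X} {ν : Measure Y}
    {f : X → X'} {g : Y → Y'} (hf : Measurable f) (hg : Measurable g)
    {γ : Measure (X × Y)} (hγ₁ : γ.map Prod.fst = μ) (hγ₂ : γ.map Prod.snd = ν) :
    transportCost c (μ.map f) (ν.map g) ≤ ∫⁻ q, c (f q.1) (g q.2) ∂γ := by
  have hcoupling : (γ.map (Prod.map f g)).map Prod.fst = μ.map f ∧
      (γ.map (Prod.map f g)).map Prod.snd = ν.map g := by
    rw [Measure.map_map measurable_fst (hf.prodMap hg), ← hγ₁,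
      Measure.map_map measurable_snd (hf.prodMap hg), ← hγ₂,
      Measure.map_map hf measurable_fst, Measure.map_map hg measurable_snd]
    exact ⟨rfl, rfl⟩
  exact (iInf₂_le (γ.map (Prod.map f g)) hcoupling).trans (lintegral_map_le _ _)

theorem transportCost_map_add_lintegral_map_le {c : X → Y → ℝ≥0∞} {c' : X' → Y' → ℝ≥0∞}
    {μ : Measure X} {ν : Measure Y} {f : X → X'} {g : Y → Y'} {h : X → Z} {d : Z → ℝ≥0∞}
    (hf : Measurable f) (hg : Measurable g) (hh : Measurable h) (hd : Measurable d)
    (hc : ∀ᵐ y ∂ν, ∀ x, c' (f x) (g y) + d (h x) ≤ c x y) :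
    transportCost c' (μ.map f) (ν.map g) + ∫⁻ z, d z ∂(μ.map h) ≤ transportCost c μ ν := by
  refine le_iInf₂ fun γ ⟨hγ₁, hγ₂⟩ => ?_
  have hd_eq : ∫⁻ z, d z ∂(μ.map h) = ∫⁻ q, d (h q.1) ∂γ := by
    rw [← hγ₁, Measure.map_map hh measurable_fst,
      lintegral_map hd (hh.comp measurable_fst)]
    rfl
  have hc_γ : ∀ᵐ q ∂γ, c' (f q.1) (g q.2) + d (h q.1) ≤ c q.1 q.2 :=
    (ae_of_ae_map measurable_snd.aemeasurable (hγ₂ ▸ hc)).mono fun q hq => hq q.1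
  calc transportCost c' (μ.map f) (ν.map g) + ∫⁻ z, d z ∂(μ.map h)
      ≤ (∫⁻ q, c' (f q.1) (g q.2) ∂γ) + ∫⁻ q, d (h q.1) ∂γ :=
        hd_eq ▸ add_le_add_left (transportCost_map_le c' hf hg hγ₁ hγ₂) _
    _ = ∫⁻ q, c' (f q.1) (g q.2) + d (h q.1) ∂γ :=
        (lintegral_add_right _ (hd.comp (hh.comp measurable_fst))).symm
    _ ≤ ∫⁻ q, c q.1 q.2 ∂γ := lintegral_mono_ae hc_γ

end Transport

section Coordinates

variable {ι κ₁ κ₂ : Type*} [Fintype ι] [Fintype κ₁] [Fintype κ₂]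

theorem Fintype.sum_comp_add_sum_comp_le {R : Type*} [AddCommMonoid R] [PartialOrder R]
    [CanonicallyOrderedAdd R] (u : ι → R) (e₁ : κ₁ ↪ ι) (e₂ : κ₂ ↪ ι)
    (hdisj : ∀ a b, e₁ a ≠ e₂ b) :
    ∑ k, u (e₁ k) + ∑ k, u (e₂ k) ≤ ∑ i, u i := by
  classical
  have hdisj' : Disjoint (Finset.univ.map e₁) (Finset.univ.map e₂) := by
    simp only [Finset.disjoint_left, Finset.mem_map, Finset.mem_univ, true_and]
    rintro _ ⟨a, rfl⟩ ⟨b, hb⟩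
    exact hdisj a b hb.symm
  rw [← Finset.sum_map _ e₁ u, ← Finset.sum_map _ e₂ u, ← Finset.sum_union hdisj']
  exact Finset.sum_le_sum_of_subset (Finset.subset_univ _)

theorem sum_lpCost_comp_add_sum_lpNorm_comp_le (p : ℝ) (e₁ : κ₁ ↪ ι) (e₂ : κ₂ ↪ ι)
    (hdisj : ∀ a b, e₁ a ≠ e₂ b) {x y : ι → ℝ} (hy : ∀ k, y (e₂ k) = 0) :
    ∑ k, ENNReal.ofReal (|x (e₁ k) - y (e₁ k)| ^ p) + ∑ k, ENNReal.ofReal (|x (e₂ k)| ^ p)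
      ≤ ∑ i, ENNReal.ofReal (|x i - y i| ^ p) := by
  simpa [hy] using Fintype.sum_comp_add_sum_comp_le
    (fun i => ENNReal.ofReal (|x i - y i| ^ p)) e₁ e₂ hdisj

end Coordinates

/-- In the 0-based `Fin M`, the indices `C, …, M - 1` are the labels `C + 1, …, M`. -/
def Fin.tailEmb (M C : ℕ) : Fin (M - C) ↪ Fin M :=
  ⟨fun i => ⟨C + i.1, by omega⟩, fun a b hab => Fin.ext (by simpa using hab)⟩

/-- partial-set bound: if `P_{f^S}, P_{f^T}` are supported on the simplex in
`ℝ^M` and the target has no mass on the labels `C+1, …, M`, then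
`W_p^p(P_{f^S}, P_{f^T}) ≥ W_p^p(Q_S, Q_T) + E_{X ~ Q_{S∖T}}[‖X‖_p^p]`, where `Q_S, Q_T` are
the marginals on the first `C - 1` coordinates and `Q_{S∖T}` is the marginal of `P_{f^S}`
on coordinates `C+1, …, M`. -/
theorem stmt11 (M C : ℕ) (hCM : C ≤ M) (p : ℝ)
    (μ ν : Measure (Fin M → ℝ))
    (hνzero : ν {x | ¬ ∀ i : Fin (M - C), x ⟨C + i.1, by have := i.2; omega⟩ = 0} = 0) :
    transportCost (fun x y => ∑ i, ENNReal.ofReal (|x i - y i| ^ p))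
        (μ.map fun x (i : Fin (C - 1)) => x (Fin.castLE (by omega) i))
        (ν.map fun x (i : Fin (C - 1)) => x (Fin.castLE (by omega) i))
      + (∫⁻ x, (∑ i, ENNReal.ofReal (|x i| ^ p))
          ∂(μ.map fun x (i : Fin (M - C)) => x ⟨C + i.1, by have := i.2; omega⟩))
      ≤ transportCost (fun x y => ∑ i, ENNReal.ofReal (|x i - y i| ^ p)) μ ν := by
  have hdisj : ∀ a b, Fin.castLEEmb (by omega : C - 1 ≤ M) a ≠ Fin.tailEmb M C b :=
    fun a b hab => by
      have : (a : ℕ) = C + b := congrArg Fin.val hab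
      omega
  refine transportCost_map_add_lintegral_map_le (by fun_prop) (by fun_prop) (by fun_prop)
    (by fun_prop) ?_
  filter_upwards [ae_iff.mpr hνzero] with y hy x
  exact sum_lpCost_comp_add_sum_lpNorm_comp_le p _ _ hdisj hy
end
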